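/- arXiv:2604.17061 — 3 statements merged into one kernel-verified Lean document; each statement's English description precedes it below -/
import Mathlib

section
/- Let Q_1, …, Q_m ∈ ℝ^{n×n} be symmetric matrices. There exists a nonzero vector u ∈ ℝ^n with uᵀ Q_t u = 0 for every t ∈ {1,…,m} if and only if there exist nonzero vectors x, y ∈ ℝ^n such that xᵀ Q_t y = 0 for every t ∈ {1,…,m} and x i * y j - x j * y i = 0 for all indices i, j. -/
open Matrix

/-- Exactness of the reduction from homogeneous quadratic feasibility to
projective bilinear feasibility (Theorem 3.2): the quadratic system
`uᵀ Q_t u = 0` has a nonzero solution iff the bilinear system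
`xᵀ Q_t y = 0` together with the `2×2` minor constraints has a solution
with `x ≠ 0`, `y ≠ 0`. -/
theorem quadratic_iff_projective_bilinear (n m : ℕ)
    (Q : Fin m → Matrix (Fin n) (Fin n) ℝ) (hQ : ∀ t, (Q t).IsSymm) :
    (∃ u : Fin n → ℝ, u ≠ 0 ∧ ∀ t, ∑ i, ∑ j, u i * Q t i j * u j = 0) ↔
    (∃ x y : Fin n → ℝ, x ≠ 0 ∧ y ≠ 0 ∧
      (∀ t, ∑ i, ∑ j, x i * Q t i j * y j = 0) ∧
      (∀ i j : Fin n, x i * y j - x j * y i = 0)) := by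
  constructor
  · rintro ⟨u, hu, hsum⟩
    exact ⟨u, u, hu, hu, hsum, fun i j => by ring⟩
  · rintro ⟨x, y, hx, hy, hsum, hminor⟩
    obtain ⟨i0, hi0⟩ : ∃ i, x i ≠ 0 := by
      by_contra h
      push_neg at h
      exact hx (funext h)
    set c : ℝ := y i0 / x i0 with hc
    have hyc : ∀ j, y j = c * x j := by
      intro j
      have := hminor i0 j
      field_simp [hc]
      rw [hc, div_mul_eq_mul_div, eq_div_iff hi0]; linarith
    have hc0 : c ≠ 0 := by
      intro h
      apply hy
      funext j
      simp [hyc j, h]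
    refine ⟨x, hx, fun t => ?_⟩
    have := hsum t
    calc ∑ i, ∑ j, x i * Q t i j * x j
        = c⁻¹ * ∑ i, ∑ j, x i * Q t i j * y j := by
          rw [Finset.mul_sum]
          refine Finset.sum_congr rfl fun i _ => ?_
          rw [Finset.mul_sum]
          refine Finset.sum_congr rfl fun j _ => ?_
          rw [hyc j]
          field_simp
      _ = 0 := by rw [this, mul_zero]
end

section
/- Let Q_1, …, Q_m ∈ ℝ^{n×n} be symmetric matrices. There exists a nonzero vector u ∈ ℝ^n with uᵀ Q_t u = 0 for every t ∈ {1,…,m} if and only if there exist nonzero vectors x, y ∈ ℝ^n and a nonzero vector z indexed by the family consisting of the zero matrix, the matrices Q_1,…,Q_m, and the elementary antisymmetric matrices E_{ij} := e_i e_jᵀ − e_j e_iᵀ (for i < j), such that xᵀ A y = 0 for every matrix A of this family, (∑_A z_A A) y = 0, and (∑_A z_A A)ᵀ x = 0. -/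
open Matrix

/-- Index type for the matrix family `{0, Q_1, …, Q_m, E_{ij} (i < j)}`. -/
def PencilIdx (n m : ℕ) : Type :=
  Unit ⊕ Fin m ⊕ {p : Fin n × Fin n // p.1 < p.2}

instance (n m : ℕ) : Fintype (PencilIdx n m) := by
  unfold PencilIdx; infer_instance

/-- The matrix family consisting of the zero matrix, the matrices
`Q_1, …, Q_m`, and the elementary antisymmetric matrices
`E_{ij} = e_i e_jᵀ − e_j e_iᵀ` for `i < j`. -/
def pencilFam {n m : ℕ} (Q : Fin m → Matrix (Fin n) (Fin n) ℝ) :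
    PencilIdx n m → Matrix (Fin n) (Fin n) ℝ
  | Sum.inl _ => 0
  | Sum.inr (Sum.inl t) => Q t
  | Sum.inr (Sum.inr p) =>
      Matrix.single p.1.1 p.1.2 1 - Matrix.single p.1.2 p.1.1 1

lemma sumE {n : ℕ} (u v : Fin n → ℝ) (p q : Fin n) :
    ∑ i, ∑ j, u i * ((Matrix.single p q (1:ℝ) - Matrix.single q p 1 :
        Matrix (Fin n) (Fin n) ℝ) i j) * v j = u p * v q - u q * v p := by
  simp [Matrix.sub_apply, Matrix.single, mul_sub, sub_mul, Finset.sum_sub_distrib,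
    ite_mul, mul_ite, Finset.sum_ite_eq, Finset.sum_ite_eq', ite_and]

/-- Composition of the reductions of Theorems 3.2 and 3.4: homogeneous
quadratic feasibility for symmetric `Q_1, …, Q_m` is equivalent to singular
bilinear pencil feasibility for the family `{0, Q_1, …, Q_m, E_{ij}}`. -/
theorem quadratic_iff_singular_pencil (n m : ℕ)
    (Q : Fin m → Matrix (Fin n) (Fin n) ℝ) (hQ : ∀ t, (Q t).IsSymm) :
    (∃ u : Fin n → ℝ, u ≠ 0 ∧ ∀ t, ∑ i, ∑ j, u i * Q t i j * u j = 0) ↔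
    (∃ x y : Fin n → ℝ, ∃ z : PencilIdx n m → ℝ, x ≠ 0 ∧ y ≠ 0 ∧ z ≠ 0 ∧
      (∀ a, ∑ i, ∑ j, x i * pencilFam Q a i j * y j = 0) ∧
      (∑ a, z a • pencilFam Q a).mulVec y = 0 ∧
      (∑ a, z a • pencilFam Q a)ᵀ.mulVec x = 0) := by
  constructor
  · rintro ⟨u, hu, hQu⟩
    refine ⟨u, u, fun a => match a with | Sum.inl _ => 1 | _ => 0, hu, hu, ?_, ?_, ?_, ?_⟩
    · intro h
      have := congrFun h (Sum.inl ())
      simp at this; exact one_ne_zero this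
    · intro a
      match a with
      | Sum.inl _ => simp [pencilFam]
      | Sum.inr (Sum.inl t) => exact hQu t
      | Sum.inr (Sum.inr p) => rw [pencilFam, sumE]; ring
    · have hz : (∑ a : PencilIdx n m, (match a with | Sum.inl _ => (1:ℝ) | _ => 0) • pencilFam Q a) = 0 := by
        apply Finset.sum_eq_zero
        intro a _
        match a with
        | Sum.inl _ => simp [pencilFam]
        | Sum.inr (Sum.inl t) => simp
        | Sum.inr (Sum.inr p) => simp
      rw [hz]; simp
    · have hz : (∑ a : PencilIdx n m, (match a with | Sum.inl _ => (1:ℝ) | _ => 0) • pencilFam Q a) = 0 := by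
        apply Finset.sum_eq_zero
        intro a _
        match a with
        | Sum.inl _ => simp [pencilFam]
        | Sum.inr (Sum.inl t) => simp
        | Sum.inr (Sum.inr p) => simp
      rw [hz]; simp
  · rintro ⟨x, y, z, hx, hy, hz, hbil, -, -⟩
    -- proportionality: x i * y j = x j * y i for all i j
    have hprop : ∀ i j : Fin n, x i * y j = x j * y i := by
      intro i j
      rcases lt_trichotomy i j with h | h | h
      · have := hbil (Sum.inr (Sum.inr ⟨(i, j), h⟩))
        rw [pencilFam, sumE] at this
        linarith
      · rw [h]
      · have := hbil (Sum.inr (Sum.inr ⟨(j, i), h⟩))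
        rw [pencilFam, sumE] at this
        linarith
    obtain ⟨i0, hi0⟩ := Function.ne_iff.mp hx
    set c : ℝ := y i0 / x i0 with hc
    have hyc : ∀ j, y j = c * x j := by
      intro j
      rw [hc, div_mul_eq_mul_div, eq_div_iff hi0]
      have := hprop i0 j
      linarith
    have hcne : c ≠ 0 := by
      intro h
      apply hy
      funext j
      simp [hyc j, h]
    refine ⟨x, hx, fun t => ?_⟩
    have := hbil (Sum.inr (Sum.inl t))
    rw [pencilFam] at this
    have h2 : ∑ i, ∑ j, x i * Q t i j * y j = c * ∑ i, ∑ j, x i * Q t i j * x j := by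
      rw [Finset.mul_sum]
      refine Finset.sum_congr rfl fun i _ => ?_
      rw [Finset.mul_sum]
      refine Finset.sum_congr rfl fun j _ => ?_
      rw [hyc j]; ring
    rw [h2] at this
    exact (mul_eq_zero.mp this).resolve_left hcne
end

section
/- Let Q_1, …, Q_m ∈ ℝ^{n×n} be symmetric matrices. Define the 3-tensor T ∈ ℝ^{n×n×N}, with N = 1 + m + n(n−1)/2, whose slices T(:,:,k) enumerate the following matrix family: the zero matrix, the matrices Q_1, …, Q_m, and the elementary antisymmetric matrices E_{ij} := e_i e_jᵀ − e_j e_iᵀ for all pairs i < j. Then T is degenerate if and only if there exists a nonzero vector u ∈ ℝ^n with uᵀ Q_t u = 0 for every t ∈ {1,…,m}. -/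
open Matrix

/-- A real 3-tensor on finite index types is degenerate if there exist nonzero
vectors `x, y, z` whose three modewise contractions with the tensor vanish. -/
def TensorDegenerate {I₁ I₂ I₃ : Type*} [Fintype I₁] [Fintype I₂] [Fintype I₃]
    (T : I₁ → I₂ → I₃ → ℝ) : Prop :=
  ∃ x : I₁ → ℝ, ∃ y : I₂ → ℝ, ∃ z : I₃ → ℝ,
    x ≠ 0 ∧ y ≠ 0 ∧ z ≠ 0 ∧
    (∀ ℓ, ∑ i, ∑ j, x i * y j * T i j ℓ = 0) ∧
    (∀ i, ∑ j, ∑ ℓ, y j * z ℓ * T i j ℓ = 0) ∧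
    (∀ j, ∑ i, ∑ ℓ, x i * z ℓ * T i j ℓ = 0)

lemma contract_std {n : ℕ} (x y : Fin n → ℝ) (i j : Fin n) :
    ∑ p, ∑ q, x p * y q * Matrix.single i j (1:ℝ) p q = x i * y j := by
  simp [Matrix.single, Finset.mul_sum, mul_ite, ite_and,
    Finset.sum_ite_eq, Finset.sum_ite_eq']

lemma card_lt_pairs (n : ℕ) :
    Fintype.card {p : Fin n × Fin n // p.1 < p.2} = n * (n - 1) / 2 := by
  have e : {p : Fin n × Fin n // p.1 < p.2} ≃ Σ j : Fin n, Fin j.val :=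
    { toFun := fun p => ⟨p.1.2, ⟨p.1.1.val, p.2⟩⟩
      invFun := fun s => ⟨(⟨s.2.val, lt_trans s.2.isLt s.1.isLt⟩, s.1), s.2.isLt⟩
      left_inv := fun p => by ext <;> rfl
      right_inv := fun s => by rfl }
  rw [Fintype.card_congr e]
  simp only [Fintype.card_sigma, Fintype.card_fin]
  rw [Fin.sum_univ_eq_sum_range (fun i => i) n]
  exact Finset.sum_range_id n

lemma T_inl {n m : ℕ} {Q : Fin m → Matrix (Fin n) (Fin n) ℝ} {T : Fin n → Fin n → PencilIdx n m → ℝ}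
    (hT : ∀ i j a, T i j a = pencilFam Q a i j) (i j : Fin n) (v : Unit) :
    T i j (Sum.inl v) = 0 := hT i j _
lemma T_Q {n m : ℕ} {Q : Fin m → Matrix (Fin n) (Fin n) ℝ} {T : Fin n → Fin n → PencilIdx n m → ℝ}
    (hT : ∀ i j a, T i j a = pencilFam Q a i j) (i j : Fin n) (t : Fin m) :
    T i j (Sum.inr (Sum.inl t)) = Q t i j := hT i j _
lemma T_E {n m : ℕ} {Q : Fin m → Matrix (Fin n) (Fin n) ℝ} {T : Fin n → Fin n → PencilIdx n m → ℝ}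
    (hT : ∀ i j a, T i j a = pencilFam Q a i j) (i j : Fin n) (p : {p : Fin n × Fin n // p.1 < p.2}) :
    T i j (Sum.inr (Sum.inr p)) = Matrix.single p.1.1 p.1.2 (1:ℝ) i j - Matrix.single p.1.2 p.1.1 (1:ℝ) i j := hT i j _

/-- The mathematical core of Theorem 4.3: the tensor whose slices enumerate
the family `{0, Q_1, …, Q_m, E_{ij}}` (which has `N = 1 + m + n(n−1)/2`
slices) is degenerate iff the homogeneous quadratic system `uᵀ Q_t u = 0`
has a nonzero real solution. -/
theorem slice_tensor_degenerate_iff_quadratic_feasible (n m : ℕ)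
    (Q : Fin m → Matrix (Fin n) (Fin n) ℝ) (hQ : ∀ t, (Q t).IsSymm)
    (T : Fin n → Fin n → PencilIdx n m → ℝ)
    (hT : ∀ i j a, T i j a = pencilFam Q a i j) :
    Fintype.card (PencilIdx n m) = 1 + m + n * (n - 1) / 2 ∧
    (TensorDegenerate T ↔
      ∃ u : Fin n → ℝ, u ≠ 0 ∧ ∀ t, ∑ i, ∑ j, u i * Q t i j * u j = 0) := by
  constructor
  · -- cardinality
    show Fintype.card (Unit ⊕ Fin m ⊕ {p : Fin n × Fin n // p.1 < p.2}) = _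
    rw [Fintype.card_sum, Fintype.card_sum, Fintype.card_unit, Fintype.card_fin,
      card_lt_pairs, add_assoc]
  · constructor
    · rintro ⟨x, y, z, hx, hy, hz, h1, _h2, _h3⟩
      -- proportionality of x and y
      have hprop : ∀ i j : Fin n, x i * y j = x j * y i := by
        have hlt : ∀ i j : Fin n, i < j → x i * y j = x j * y i := by
          intro i j hij
          have := h1 (Sum.inr (Sum.inr ⟨(i, j), hij⟩))
          simp only [T_E hT, mul_sub,
            Finset.sum_sub_distrib, contract_std] at this
          linarith
        intro i j
        rcases lt_trichotomy i j with h | h | h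
        · exact hlt i j h
        · rw [h]
        · exact (hlt j i h).symm
      obtain ⟨i0, hi0⟩ := Function.ne_iff.mp hx
      rw [Pi.zero_apply] at hi0
      refine ⟨x, hx, fun t => ?_⟩
      have hQt := h1 (Sum.inr (Sum.inl t))
      simp only [T_Q hT] at hQt
      -- y = c • x with c = y i0 / x i0
      set c : ℝ := y i0 / x i0 with hc
      have hyx : ∀ j, y j = c * x j := by
        intro j
        have h := hprop j i0
        rw [hc, div_mul_eq_mul_div, eq_div_iff hi0]
        linarith
      have hcne : c ≠ 0 := by
        obtain ⟨j, hj⟩ := Function.ne_iff.mp hy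
        rw [Pi.zero_apply] at hj
        intro h0
        rw [hyx j, h0, zero_mul] at hj
        exact hj rfl
      have : c * (∑ i, ∑ j, x i * Q t i j * x j) = 0 := by
        rw [← hQt]
        rw [Finset.mul_sum]
        refine Finset.sum_congr rfl fun i _ => ?_
        rw [Finset.mul_sum]
        refine Finset.sum_congr rfl fun j _ => ?_
        rw [hyx j]; ring
      exact (mul_eq_zero.mp this).resolve_left hcne
    · rintro ⟨u, hu, hQu⟩
      refine ⟨u, u, Sum.elim (fun _ => 1) 0, hu, hu, ?_, ?_, ?_, ?_⟩
      · intro h0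
        have := congrFun h0 (Sum.inl ())
        exact one_ne_zero this
      · rintro (⟨⟩ | t | ⟨⟨i, j⟩, hij⟩)
        · simp [T_inl hT]
        · have := hQu t
          rw [← this]
          refine Finset.sum_congr rfl fun i _ => Finset.sum_congr rfl fun j _ => ?_
          simp [T_Q hT]; ring
        · simp only [T_E hT, mul_sub,
            Finset.sum_sub_distrib, contract_std]
          ring
      · intro i
        refine Finset.sum_eq_zero fun j _ => Finset.sum_eq_zero fun ℓ _ => ?_
        rcases ℓ with ⟨⟩ | ℓ <;> simp [T_inl hT]
      · intro j
        refine Finset.sum_eq_zero fun i _ => Finset.sum_eq_zero fun ℓ _ => ?_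
        rcases ℓ with ⟨⟩ | ℓ <;> simp [T_inl hT]
end
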